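/- arXiv:1401.8239 — 7 statements merged into one kernel-verified Lean document; each statement's English description precedes it below -/
import Mathlib

section
/- Let p, q be positive integers, let C(1), …, C(q) be selfadjoint (Hermitian) p×p complex matrices that are linearly independent over ℝ, and let b(1), …, b(q) be real numbers. If there exists a positive definite matrix X ∈ M_p(ℂ) such that tr(C(ι)·X) = b(ι) for all ι = 1, …, q, then the function V : ℝ^q → ℝ defined by V(x) = tr(exp(Σ_{ι=1}^q x(ι)·C(ι))) − Σ_{ι=1}^q x(ι)·b(ι) is coercive, i.e. V(x) → +∞ as ‖x‖ → ∞. -/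
open scoped Matrix ComplexOrder

/-- The function `V(x) = tr(exp(∑ ι, x ι • C ι)) − ∑ ι, x ι * b ι`. -/
noncomputable def convPotential {p q : ℕ} (C : Fin q → Matrix (Fin p) (Fin p) ℂ)
    (b : Fin q → ℝ) (x : Fin q → ℝ) : ℝ :=
  (Matrix.trace (NormedSpace.exp (∑ ι, x ι • C ι))).re - ∑ ι, x ι * b ι

/-!
Diagonalise `A = ∑ ι, x ι • C ι = U diag(λ) Uᴴ`. The constraints turn the linear part of `V` into
`tr(A X)`, so `V(x) = ∑ i, (exp λᵢ - λᵢ yᵢ)` with `yᵢ = (Uᴴ X U)ᵢᵢ`. Since `m • 1 ≤ X` for some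
`m > 0`, every `yᵢ` lies in `[m, tr X]` whatever `U` is, and then `exp λ - λ y ≥ m |λ| - const`.
Hence `V(x) ≥ m ∑ |λᵢ| - const`, and `∑ |λᵢ|` bounds the entries of `A`, whose size is at least a
multiple of `‖x‖` because the `C ι` are linearly independent.
-/

open scoped MatrixOrder

lemma Real.mul_abs_sub_sq_le_exp_sub_mul {m M y a : ℝ} (hmy : m ≤ y) (hyM : y ≤ M) :
    m * |a| - (M + m) ^ 2 ≤ Real.exp a - a * y := by
  rcases le_or_gt 0 a with ha | ha
  · rw [abs_of_nonneg ha]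
    nlinarith [Real.quadratic_le_exp_of_nonneg ha, mul_le_mul_of_nonneg_left hyM ha]
  · rw [abs_of_neg ha]
    nlinarith [Real.exp_pos a, mul_le_mul_of_nonneg_left hmy (neg_nonneg.2 ha.le)]

lemma LinearIndependent.exists_pos_mul_norm_le_norm_sum {𝕜 E ι : Type*}
    [NontriviallyNormedField 𝕜] [CompleteSpace 𝕜] [NormedAddCommGroup E] [NormedSpace 𝕜 E]
    [Fintype ι] {v : ι → E} (hv : LinearIndependent 𝕜 v) :
    ∃ c > 0, ∀ x : ι → 𝕜, c * ‖x‖ ≤ ‖∑ i, x i • v i‖ := by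
  obtain ⟨K, hK, hKv⟩ := (Fintype.linearCombination 𝕜 v).exists_antilipschitzWith
    (LinearMap.ker_eq_bot.2 (linearIndependent_iff_injective_fintypeLinearCombination.1 hv))
  refine ⟨(K : ℝ)⁻¹, by positivity, fun x => ?_⟩
  have := hKv.le_mul_dist x 0
  simp only [dist_zero_right, map_zero, Fintype.linearCombination_apply] at this
  rw [inv_mul_le_iff₀ (by positivity)]
  exact this

namespace Matrix

variable {n 𝕜 : Type*} [Fintype n] [DecidableEq n] [RCLike 𝕜]

lemma IsHermitian.eq_mul_diagonal_mul_star {A : Matrix n n 𝕜}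
    (hA : A.IsHermitian) :
    A = (hA.eigenvectorUnitary : Matrix n n 𝕜) * diagonal (RCLike.ofReal ∘ hA.eigenvalues) *
      star (hA.eigenvectorUnitary : Matrix n n 𝕜) := by
  simpa only [Unitary.conjStarAlgAut_apply] using hA.spectral_theorem

lemma trace_unitary_conj (U : unitaryGroup n 𝕜) (B : Matrix n n 𝕜) :
    trace ((U : Matrix n n 𝕜) * B * star (U : Matrix n n 𝕜)) = trace B := by
  rw [trace_mul_cycle, Unitary.coe_star_mul_self, one_mul]

lemma IsHermitian.re_trace_exp {A : Matrix n n ℂ} (hA : A.IsHermitian) :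
    (trace (NormedSpace.exp A)).re = ∑ i, Real.exp (hA.eigenvalues i) := by
  set U := hA.eigenvectorUnitary
  have hinv : (U : Matrix n n ℂ)⁻¹ = star (U : Matrix n n ℂ) :=
    inv_eq_left_inv (Unitary.coe_star_mul_self U)
  conv_lhs => rw [hA.eq_mul_diagonal_mul_star, ← hinv, exp_conj _ _ Unitary.isUnit_coe, hinv,
    trace_unitary_conj]
  rw [exp_diagonal, trace_diagonal, Complex.re_sum]
  refine Finset.sum_congr rfl fun i _ => ?_
  simp [← Complex.exp_eq_exp_ℂ, ← Complex.ofReal_exp]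

lemma IsHermitian.re_trace_mul {A : Matrix n n 𝕜} (hA : A.IsHermitian)
    (X : Matrix n n 𝕜) :
    RCLike.re (trace (A * X)) = ∑ i, hA.eigenvalues i *
      RCLike.re ((star (hA.eigenvectorUnitary : Matrix n n 𝕜) * X *
        (hA.eigenvectorUnitary : Matrix n n 𝕜)) i i) := by
  set U : Matrix n n 𝕜 := (hA.eigenvectorUnitary : Matrix n n 𝕜)
  have hcycle : trace (U * diagonal (RCLike.ofReal ∘ hA.eigenvalues) * star U * X) =
      trace (diagonal (RCLike.ofReal ∘ hA.eigenvalues) * (star U * X * U)) := by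
    rw [mul_assoc, mul_assoc, trace_mul_comm]
    simp only [mul_assoc]
  conv_lhs => rw [hA.eq_mul_diagonal_mul_star]
  rw [hcycle, trace, map_sum]
  simp only [diag_apply, diagonal_mul, Function.comp_apply, RCLike.re_ofReal_mul]

lemma PosDef.exists_pos_algebraMap_le {X : Matrix n n 𝕜} (hX : X.PosDef) :
    ∃ m > 0, algebraMap ℝ (Matrix n n 𝕜) m ≤ X := by
  cases subsingleton_or_nontrivial (Matrix n n 𝕜) with
  | inl _ => exact ⟨1, one_pos, (Subsingleton.elim _ X).le⟩
  | inr _ =>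
    exact (CFC.exists_pos_algebraMap_le_iff hX.isHermitian.isSelfAdjoint).2
      fun _ h => hX.isStrictlyPositive.spectrum_pos h

lemma le_re_diag_unitary_conj {X : Matrix n n 𝕜} {m : ℝ} (hm : algebraMap ℝ _ m ≤ X)
    (U : unitaryGroup n 𝕜) (i : n) :
    m ≤ RCLike.re ((star (U : Matrix n n 𝕜) * X * U) i i) := by
  have hconj := star_left_conjugate_le_conjugate hm (U : Matrix n n 𝕜)
  rw [← Algebra.commutes, mul_assoc, Unitary.coe_star_mul_self, mul_one] at hconj
  have := (le_iff.1 hconj).diag_nonneg (i := i)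
  rw [sub_apply, algebraMap_matrix_apply, if_pos rfl, sub_nonneg, RCLike.le_iff_re_im] at this
  simpa using this.1

lemma PosSemidef.re_diag_unitary_conj_le_re_trace {X : Matrix n n 𝕜} (hX : X.PosSemidef)
    (U : unitaryGroup n 𝕜) (i : n) :
    RCLike.re ((star (U : Matrix n n 𝕜) * X * U) i i) ≤ RCLike.re (trace X) := by
  have hY := hX.conjTranspose_mul_mul_same (U : Matrix n n 𝕜)
  rw [← star_eq_conjTranspose] at hY
  have htr : trace (star (U : Matrix n n 𝕜) * X * (U : Matrix n n 𝕜)) = trace X := by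
    rw [trace_mul_cycle, Unitary.mul_star_self_of_mem U.2, one_mul]
  rw [← htr, trace, map_sum]
  exact Finset.single_le_sum (f := fun j => RCLike.re ((star (U : Matrix n n 𝕜) * X * U) j j))
    (fun j _ => RCLike.nonneg_iff.1 hY.diag_nonneg |>.1) (Finset.mem_univ i)

lemma IsHermitian.le_re_trace_exp_sub_re_trace_mul {A X : Matrix n n ℂ} (hA : A.IsHermitian)
    (hX : X.PosSemidef) {m : ℝ} (hm : algebraMap ℝ _ m ≤ X) :
    m * ∑ i, |hA.eigenvalues i| - Fintype.card n * ((trace X).re + m) ^ 2 ≤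
      (trace (NormedSpace.exp A)).re - (trace (A * X)).re := by
  have htr := hA.re_trace_mul X
  simp only [RCLike.re_to_complex] at htr
  rw [hA.re_trace_exp, htr, ← Finset.sum_sub_distrib, Finset.mul_sum, ← nsmul_eq_mul,
    ← Finset.card_univ, ← Finset.sum_const, ← Finset.sum_sub_distrib]
  refine Finset.sum_le_sum fun i _ => Real.mul_abs_sub_sq_le_exp_sub_mul ?_ ?_
  · simpa using le_re_diag_unitary_conj hm hA.eigenvectorUnitary i
  · simpa using hX.re_diag_unitary_conj_le_re_trace hA.eigenvectorUnitary i

section SupNorm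

attribute [local instance] Matrix.normedAddCommGroup Matrix.normedSpace

lemma IsHermitian.norm_le_sum_abs_eigenvalues {A : Matrix n n 𝕜} (hA : A.IsHermitian) :
    ‖A‖ ≤ ∑ i, |hA.eigenvalues i| := by
  refine (norm_le_iff (by positivity)).2 fun j k => ?_
  conv_lhs => rw [hA.eq_mul_diagonal_mul_star, mul_apply]
  refine (norm_sum_le _ _).trans (Finset.sum_le_sum fun i _ => ?_)
  rw [mul_diagonal, norm_mul, norm_mul, star_apply, norm_star, Function.comp_apply,
    RCLike.norm_ofReal]
  have hji := entry_norm_bound_of_unitary hA.eigenvectorUnitary.2 j i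
  have hki := entry_norm_bound_of_unitary hA.eigenvectorUnitary.2 k i
  calc _ ≤ 1 * |hA.eigenvalues i| * 1 := by gcongr
    _ = |hA.eigenvalues i| := by ring

lemma exists_pos_mul_norm_le_sum_abs_eigenvalues {ι : Type*} [Fintype ι]
    {C : ι → Matrix n n 𝕜} (hC : LinearIndependent ℝ C) :
    ∃ c > 0, ∀ (x : ι → ℝ) (hx : (∑ i, x i • C i).IsHermitian),
      c * ‖x‖ ≤ ∑ j, |hx.eigenvalues j| := by
  obtain ⟨c, hc, hcC⟩ := hC.exists_pos_mul_norm_le_norm_sum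
  exact ⟨c, hc, fun x hx => (hcC x).trans hx.norm_le_sum_abs_eigenvalues⟩

end SupNorm

end Matrix

theorem coercive_of_posdef_solution_general {p q : ℕ}
    (C : Fin q → Matrix (Fin p) (Fin p) ℂ) (hC : ∀ ι, (C ι).IsHermitian)
    (hind : LinearIndependent ℝ C) (b : Fin q → ℝ)
    (X : Matrix (Fin p) (Fin p) ℂ) (hX : X.PosDef)
    (hsol : ∀ ι, Matrix.trace (C ι * X) = (b ι : ℂ)) :
    ∀ r : ℝ, ∃ R : ℝ, ∀ x : Fin q → ℝ, R ≤ ‖x‖ → r ≤ convPotential C b x := by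
  have hA (x : Fin q → ℝ) : (∑ ι, x ι • C ι).IsHermitian :=
    isSelfAdjoint_sum _ fun ι _ => (IsSelfAdjoint.all (x ι)).smul (hC ι)
  have hlin (x : Fin q → ℝ) : ∑ ι, x ι * b ι = (Matrix.trace ((∑ ι, x ι • C ι) * X)).re := by
    simp [Finset.sum_mul, Matrix.trace_sum, hsol]
  obtain ⟨m, hm, hmX⟩ := hX.exists_pos_algebraMap_le
  obtain ⟨c, hc, hcC⟩ := Matrix.exists_pos_mul_norm_le_sum_abs_eigenvalues hind
  set β := p * ((Matrix.trace X).re + m) ^ 2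
  have hV (x : Fin q → ℝ) : m * c * ‖x‖ - β ≤ convPotential C b x := by
    have := (hA x).le_re_trace_exp_sub_re_trace_mul hX.posSemidef hmX
    rw [Fintype.card_fin] at this
    have hnorm := mul_le_mul_of_nonneg_left (hcC x (hA x)) hm.le
    rw [convPotential, hlin]
    linarith
  intro r
  refine ⟨(r + β) / (m * c), fun x hx => ?_⟩
  rw [div_le_iff₀ (by positivity)] at hx
  linarith [hV x]

theorem coercive_of_posdef_solution {p q : ℕ} (hp : 0 < p) (hq : 0 < q)
    (C : Fin q → Matrix (Fin p) (Fin p) ℂ) (hC : ∀ ι, (C ι).IsHermitian)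
    (hind : LinearIndependent ℝ C) (b : Fin q → ℝ)
    (X : Matrix (Fin p) (Fin p) ℂ) (hX : X.PosDef)
    (hsol : ∀ ι, Matrix.trace (C ι * X) = (b ι : ℂ)) :
    ∀ r : ℝ, ∃ R : ℝ, ∀ x : Fin q → ℝ, R ≤ ‖x‖ → r ≤ convPotential C b x :=
  coercive_of_posdef_solution_general C hC hind b X hX hsol
end

section
/- Let p, q be positive integers, let C(1), …, C(q) be selfadjoint (Hermitian) p×p complex matrices that are linearly independent over ℝ, and let b(1), …, b(q) be real numbers. Define V : ℝ^q → ℝ by V(x) = tr(exp(Σ_{ι=1}^q x(ι)·C(ι))) − Σ_{ι=1}^q x(ι)·b(ι). If V is coercive (V(x) → +∞ as ‖x‖ → ∞), then V attains a global minimum at some point x⁰ ∈ ℝ^q, and the matrix X₀ = exp(Σ_{ι=1}^q x⁰(ι)·C(ι)) is positive definite and satisfies tr(C(ι)·X₀) = b(ι) for all ι = 1, …, q. -/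
/-!
A continuous coercive function on `ℝ^q` attains its minimum, say at `x₀`. Differentiating `V`
along the coordinate lines through `x₀` gives the equations: although `A` and `B` need not commute,
cyclicity of the trace makes every term of the derivative of `tr (A + t B)^(n+1)` equal to
`tr (B (A + t B)^n)`, so termwise differentiation of the exponential series yields
`d/dt tr exp(A + t B) = tr (B exp(A + t B))`. Finally `exp A = exp(A/2)ᴴ exp(A/2)` is positive
semidefinite and invertible, hence positive definite, and `tr (C ι X₀)` is real because `C ι` and
`X₀` are Hermitian.
-/

open scoped Matrix ComplexOrder

open NormedSpace Nat

theorem exists_forall_le_of_coercive {E : Type*} [NormedAddCommGroup E] [ProperSpace E]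
    {f : E → ℝ} (hf : Continuous f) (hcoercive : ∀ r : ℝ, ∃ R : ℝ, ∀ x, R ≤ ‖x‖ → r ≤ f x) :
    ∃ x, ∀ y, f x ≤ f y := by
  refine hf.exists_forall_le (Filter.tendsto_atTop.2 fun r => ?_)
  obtain ⟨R, hR⟩ := hcoercive r
  rw [← Metric.cobounded_eq_cocompact, ← comap_norm_atTop]
  exact Filter.eventually_comap.2 <|
    (Filter.eventually_ge_atTop R).mono fun _ h x hx => hR x (hx ▸ h)

section TraceExp

variable {𝕜 𝔸 F : Type*} [RCLike 𝕜] [NormedRing 𝔸] [NormedAlgebra 𝕜 𝔸]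
  [NormedAddCommGroup F] [NormedSpace 𝕜 F] (τ : 𝔸 →L[𝕜] F)

theorem norm_mul_pow_le (a x : 𝔸) (n : ℕ) : ‖a * x ^ n‖ ≤ ‖a‖ * ‖x‖ ^ n := by
  induction n with
  | zero => simp
  | succ n ih =>
    calc ‖a * x ^ (n + 1)‖ ≤ ‖a * x ^ n‖ * ‖x‖ := by
          rw [pow_succ, ← mul_assoc]; exact norm_mul_le _ _
      _ ≤ ‖a‖ * ‖x‖ ^ n * ‖x‖ := by gcongr
      _ = ‖a‖ * ‖x‖ ^ (n + 1) := by ring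

theorem hasDerivAt_map_pow_succ_add_smul (hτ : ∀ x y, τ (x * y) = τ (y * x)) (a b : 𝔸) (n : ℕ)
    (t : 𝕜) : HasDerivAt (fun s : 𝕜 => τ ((a + s • b) ^ (n + 1)))
      ((n + 1 : 𝕜) • τ (b * (a + t • b) ^ n)) t := by
  have hline : HasDerivAt (fun s : 𝕜 => a + s • b) b t := by
    simpa using ((hasDerivAt_id t).smul_const b).const_add a
  refine (τ.hasFDerivAt.comp_hasDerivAt t (hline.fun_pow' (n + 1))).congr_deriv ?_
  have hcycle : ∀ i ∈ Finset.range (n + 1),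
      τ ((a + t • b) ^ (n - i) * b * (a + t • b) ^ i) = τ (b * (a + t • b) ^ n) := by
    intro i hi
    rw [hτ, ← mul_assoc, ← pow_add, Nat.add_sub_cancel' (Finset.mem_range_succ_iff.1 hi), hτ]
  simp [map_sum, Finset.sum_congr rfl hcycle, ← Nat.cast_smul_eq_nsmul 𝕜]

theorem norm_map_mul_pow_add_smul_le (a b : 𝔸) {s t : 𝕜} (hs : s ∈ Metric.ball t 1) (n : ℕ) :
    ‖τ (b * (a + s • b) ^ n)‖ ≤ ‖τ‖ * ‖b‖ * (‖a‖ + (‖t‖ + 1) * ‖b‖) ^ n := by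
  have hs' : ‖s‖ ≤ ‖t‖ + 1 := by
    rw [Metric.mem_ball, dist_eq_norm] at hs
    linarith [norm_le_norm_add_norm_sub' s t]
  have hline : ‖a + s • b‖ ≤ ‖a‖ + (‖t‖ + 1) * ‖b‖ :=
    calc ‖a + s • b‖ ≤ ‖a‖ + ‖s‖ * ‖b‖ := (norm_add_le _ _).trans_eq (by rw [norm_smul])
      _ ≤ ‖a‖ + (‖t‖ + 1) * ‖b‖ := by gcongr
  calc ‖τ (b * (a + s • b) ^ n)‖ ≤ ‖τ‖ * (‖b‖ * ‖a + s • b‖ ^ n) :=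
        (τ.le_opNorm _).trans (by gcongr; exact norm_mul_pow_le _ _ _)
    _ ≤ ‖τ‖ * ‖b‖ * (‖a‖ + (‖t‖ + 1) * ‖b‖) ^ n := by rw [← mul_assoc]; gcongr

theorem hasDerivAt_map_exp_add_smul [CompleteSpace 𝔸] [CompleteSpace F]
    (hτ : ∀ x y, τ (x * y) = τ (y * x)) (a b : 𝔸) (t : 𝕜) :
    HasDerivAt (fun s : 𝕜 => τ (exp (a + s • b))) (τ (b * exp (a + t • b))) t := by
  let g : ℕ → 𝕜 → F := fun n s => ((n + 1)! : 𝕜)⁻¹ • τ ((a + s • b) ^ (n + 1))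
  let g' : ℕ → 𝕜 → F := fun n s => (n ! : 𝕜)⁻¹ • τ (b * (a + s • b) ^ n)
  let ρ := ‖a‖ + (‖t‖ + 1) * ‖b‖
  have hg : ∀ n s, HasDerivAt (g n) (g' n s) s := by
    intro n s
    refine ((hasDerivAt_map_pow_succ_add_smul τ hτ a b n s).const_smul _).congr_deriv ?_
    rw [smul_smul]
    congr 1
    push_cast [Nat.factorial_succ]
    field_simp
  have hg' : ∀ n, ∀ s ∈ Metric.ball t 1, ‖g' n s‖ ≤ ‖τ‖ * ‖b‖ * (ρ ^ n / n !) := by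
    intro n s hs
    calc ‖g' n s‖ = ‖τ (b * (a + s • b) ^ n)‖ / n ! := by
          rw [norm_smul, norm_inv, RCLike.norm_natCast, inv_mul_eq_div]
      _ ≤ ‖τ‖ * ‖b‖ * ρ ^ n / n ! := by gcongr; exact norm_map_mul_pow_add_smul_le τ a b hs n
      _ = ‖τ‖ * ‖b‖ * (ρ ^ n / n !) := by ring
  have hexp : ∀ s : 𝕜, HasSum (fun n => ((n ! : 𝕜)⁻¹ • (a + s • b) ^ n)) (exp (a + s • b)) :=
    fun s => exp_series_hasSum_exp' _
  -- The shift by one index makes `g n` differentiate to exactly `g' n`; the dropped term is `τ 1`.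
  have hsum_g : ∀ s : 𝕜, HasSum (fun n => g n s) (τ (exp (a + s • b)) - τ 1) := by
    intro s
    have := (hasSum_nat_add_iff' 1).2 ((hexp s).mapL τ)
    simpa [g] using this
  have hsum_g' : HasSum (fun n => g' n t) (τ (b * exp (a + t • b))) := by
    have := (hexp t).mapL (τ.comp (ContinuousLinearMap.mul 𝕜 𝔸 b))
    simpa [g'] using this
  have key := hasDerivAt_tsum_of_isPreconnected ((Real.summable_pow_div_factorial ρ).mul_left _)
    Metric.isOpen_ball (convex_ball t 1).isPreconnected (fun n s _ => hg n s) hg'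
    (Metric.mem_ball_self one_pos) (hsum_g t).summable (Metric.mem_ball_self one_pos)
  rw [hsum_g'.tsum_eq] at key
  refine (key.const_add (τ 1)).congr_of_eventuallyEq (Filter.Eventually.of_forall fun s => ?_)
  simp [(hsum_g s).tsum_eq]

end TraceExp

namespace Matrix

theorem IsHermitian.isSelfAdjoint_trace_mul {n R : Type*} [Fintype n] [CommRing R] [StarRing R]
    {A B : Matrix n n R} (hA : A.IsHermitian) (hB : B.IsHermitian) :
    IsSelfAdjoint (A * B).trace := by
  rw [IsSelfAdjoint, ← trace_conjTranspose, conjTranspose_mul, hA.eq, hB.eq, trace_mul_comm]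

attribute [local instance] Matrix.linftyOpNormedRing Matrix.linftyOpNormedAlgebra

theorem IsHermitian.posDef_exp {n 𝕜 : Type*} [Fintype n] [DecidableEq n] [RCLike 𝕜]
    {A : Matrix n n 𝕜} (hA : A.IsHermitian) : (NormedSpace.exp A).PosDef := by
  have hhalf : ((2⁻¹ : ℝ) • A).IsHermitian := hA.smul (IsSelfAdjoint.all _)
  have hsquare : NormedSpace.exp A =
      (NormedSpace.exp ((2⁻¹ : ℝ) • A))ᴴ * NormedSpace.exp ((2⁻¹ : ℝ) • A) := by
    rw [hhalf.exp.eq, ← exp_add_of_commute _ _ (Commute.refl _), ← add_smul]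
    norm_num
  rw [hsquare]
  exact (posSemidef_conjTranspose_mul_self _).posDef_iff_isUnit.mpr (hsquare ▸ isUnit_exp A)

end Matrix

section ConvPotential

attribute [local instance] Matrix.linftyOpNormedRing Matrix.linftyOpNormedAlgebra

variable {p q : ℕ} (C : Fin q → Matrix (Fin p) (Fin p) ℂ) (b : Fin q → ℝ)

theorem continuous_convPotential : Continuous (convPotential C b) := by
  unfold convPotential
  fun_prop

theorem convPotential_add_smul (x v : Fin q → ℝ) (t : ℝ) :
    convPotential C b (x + t • v) = (Matrix.trace (exp (∑ ι, x ι • C ι + t • ∑ ι, v ι • C ι))).re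
      - (∑ ι, x ι * b ι + t * ∑ ι, v ι * b ι) := by
  simp only [convPotential, Pi.add_apply, Pi.smul_apply, smul_eq_mul, add_smul, add_mul, mul_smul,
    mul_assoc, Finset.sum_add_distrib, Finset.smul_sum, Finset.mul_sum]

theorem hasDerivAt_convPotential_add_smul (x v : Fin q → ℝ) :
    HasDerivAt (fun t : ℝ => convPotential C b (x + t • v))
      ((Matrix.trace ((∑ ι, v ι • C ι) * exp (∑ ι, x ι • C ι))).re - ∑ ι, v ι * b ι) 0 := by
  let τ : Matrix (Fin p) (Fin p) ℂ →L[ℝ] ℝ :=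
    Complex.reCLM.comp (Matrix.traceLinearMap (Fin p) ℝ ℂ).toContinuousLinearMap
  have hτ : ∀ X Y, τ (X * Y) = τ (Y * X) := fun X Y =>
    congrArg Complex.re (Matrix.trace_mul_comm X Y)
  have hlin : HasDerivAt (fun t : ℝ => ∑ ι, x ι * b ι + t * ∑ ι, v ι * b ι) (∑ ι, v ι * b ι) 0 := by
    simpa using ((hasDerivAt_id (0 : ℝ)).mul_const (∑ ι, v ι * b ι)).const_add (∑ ι, x ι * b ι)
  have h := (hasDerivAt_map_exp_add_smul τ hτ (∑ ι, x ι • C ι) (∑ ι, v ι • C ι) 0).sub hlin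
  rw [zero_smul, add_zero] at h
  exact h.congr_of_eventuallyEq (.of_forall (convPotential_add_smul C b x v))

theorem re_trace_mul_exp_eq_of_forall_convPotential_le {x₀ : Fin q → ℝ}
    (hmin : ∀ x, convPotential C b x₀ ≤ convPotential C b x) (ι : Fin q) :
    (Matrix.trace (C ι * exp (∑ ι', x₀ ι' • C ι'))).re = b ι := by
  have hloc : IsLocalMin (fun t : ℝ => convPotential C b (x₀ + t • Pi.single ι 1)) 0 :=
    Filter.Eventually.of_forall fun t => by simpa using hmin (x₀ + t • Pi.single ι 1)
  have := hloc.hasDerivAt_eq_zero (hasDerivAt_convPotential_add_smul C b x₀ (Pi.single ι 1))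
  simpa [Pi.single_apply, sub_eq_zero] using this

end ConvPotential

theorem min_attained_and_solution_of_coercive_general {p q : ℕ}
    (C : Fin q → Matrix (Fin p) (Fin p) ℂ) (hC : ∀ ι, (C ι).IsHermitian)
    (b : Fin q → ℝ)
    (hcoercive : ∀ r : ℝ, ∃ R : ℝ, ∀ x : Fin q → ℝ, R ≤ ‖x‖ → r ≤ convPotential C b x) :
    ∃ x0 : Fin q → ℝ, (∀ x : Fin q → ℝ, convPotential C b x0 ≤ convPotential C b x) ∧
      (NormedSpace.exp (∑ ι, x0 ι • C ι)).PosDef ∧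
      ∀ ι, Matrix.trace (C ι * NormedSpace.exp (∑ ι', x0 ι' • C ι')) = (b ι : ℂ) := by
  obtain ⟨x0, hmin⟩ := exists_forall_le_of_coercive (continuous_convPotential C b) hcoercive
  have hS : (∑ ι, x0 ι • C ι).IsHermitian := Matrix.isHermitian_iff_isSelfAdjoint.2 <|
    isSelfAdjoint_sum _ fun ι _ => ((hC ι).smul (IsSelfAdjoint.all (x0 ι))).isSelfAdjoint
  refine ⟨x0, hmin, hS.posDef_exp, fun ι => ?_⟩
  rw [← Complex.conj_eq_iff_re.1 ((hC ι).isSelfAdjoint_trace_mul hS.exp),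
    re_trace_mul_exp_eq_of_forall_convPotential_le C b hmin ι]

theorem min_attained_and_solution_of_coercive {p q : ℕ} (hp : 0 < p) (hq : 0 < q)
    (C : Fin q → Matrix (Fin p) (Fin p) ℂ) (hC : ∀ ι, (C ι).IsHermitian)
    (hind : LinearIndependent ℝ C) (b : Fin q → ℝ)
    (hcoercive : ∀ r : ℝ, ∃ R : ℝ, ∀ x : Fin q → ℝ, R ≤ ‖x‖ → r ≤ convPotential C b x) :
    ∃ x0 : Fin q → ℝ, (∀ x : Fin q → ℝ, convPotential C b x0 ≤ convPotential C b x) ∧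
      (NormedSpace.exp (∑ ι, x0 ι • C ι)).PosDef ∧
      ∀ ι, Matrix.trace (C ι * NormedSpace.exp (∑ ι', x0 ι' • C ι')) = (b ι : ℂ) :=
  min_attained_and_solution_of_coercive_general C hC b hcoercive
end

section
/- Let p, q be positive integers, let C(1), …, C(q) be selfadjoint (Hermitian) p×p complex matrices, and let b(1), …, b(q) be real numbers. The function V : ℝ^q → ℝ defined by V(x) = tr(exp(Σ_{ι=1}^q x(ι)·C(ι))) − Σ_{ι=1}^q x(ι)·b(ι) is differentiable at every point x ∈ ℝ^q, with partial derivatives ∂V/∂x_κ(x) = tr(C(κ)·exp(Σ_{ι=1}^q x(ι)·C(ι))) − b(κ) for each κ = 1, …, q. -/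
/-!
Expand `exp` as a power series and apply a tracial continuous linear functional `τ` termwise.
By cyclicity of `τ`, every term of the derivative of `τ (M ^ (n + 1))` at `A` in direction `H`
equals `τ (H * A ^ n)`, so after the factorials are absorbed the termwise derivatives sum to
`H ↦ τ (H * exp A)`. Termwise differentiation is legitimate on each ball `‖M‖ < R`, where the
`n`-th derivative is dominated by `‖expSeries n‖ * R ^ n`, a summable sequence because `exp` has
infinite radius of convergence. The potential is the real part of `tr ∘ exp` composed with the
linear map `x ↦ ∑ ι, x ι • C ι`, minus a linear function.
-/

open scoped Matrix

open NormedSpace ContinuousLinearMap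
open scoped Nat

section Tracial

variable {𝕂 𝔸 E : Type*} [RCLike 𝕂] [NormedRing 𝔸] [NormedAlgebra 𝕂 𝔸]
  [NormedAddCommGroup E] [NormedSpace 𝕂 E] (τ : 𝔸 →L[𝕂] E)

theorem hasFDerivAt_trace_pow_succ (hτ : ∀ a b, τ (a * b) = τ (b * a)) (n : ℕ) (A : 𝔸) :
    HasFDerivAt (fun M => τ (M ^ (n + 1))) ((n + 1) • τ.comp ((mul 𝕂 𝔸).flip (A ^ n))) A := by
  refine (τ.hasFDerivAt.comp A (hasFDerivAt_pow' (n + 1))).congr_fderiv ?_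
  ext H
  have hcyc : ∀ i ∈ Finset.range (n + 1), τ (A ^ (n - i) * H * A ^ i) = τ (H * A ^ n) := by
    intro i hi
    rw [hτ, ← mul_assoc, ← pow_add, Nat.add_sub_of_le (Finset.mem_range_succ_iff.mp hi), hτ]
  simp [Finset.sum_congr rfl hcyc]

theorem hasFDerivAt_trace_expSeries_succ (hτ : ∀ a b, τ (a * b) = τ (b * a)) (n : ℕ) (A : 𝔸) :
    HasFDerivAt (fun M => τ (((n + 1)! ⁻¹ : 𝕂) • M ^ (n + 1)))
      (τ.comp ((mul 𝕂 𝔸).flip ((n ! ⁻¹ : 𝕂) • A ^ n))) A := by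
  simp_rw [map_smul]
  refine ((hasFDerivAt_trace_pow_succ τ hτ n A).const_smul _).congr_fderiv ?_
  have hcoef : ((n + 1)! ⁻¹ : 𝕂) * (n + 1) = (n ! : 𝕂)⁻¹ := by
    rw [Nat.factorial_succ]
    push_cast
    field_simp
  ext H
  simp [← Nat.cast_smul_eq_nsmul 𝕂, smul_smul, hcoef]

theorem hasFDerivAt_trace_exp [CompleteSpace 𝔸] [CompleteSpace E]
    (hτ : ∀ a b, τ (a * b) = τ (b * a)) (A : 𝔸) :
    HasFDerivAt (fun M => τ (exp M)) (τ.comp ((mul 𝕂 𝔸).flip (exp A))) A := by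
  -- Only to see that balls of `𝔸` are convex, hence preconnected.
  let _ : NormedSpace ℝ 𝔸 := NormedSpace.restrictScalars ℝ 𝕂 𝔸
  let Φ : 𝔸 →L[𝕂] 𝔸 →L[𝕂] E := (compL 𝕂 𝔸 𝔸 E τ).comp (mul 𝕂 𝔸).flip
  have hexp : ∀ M, τ (exp M) = τ 1 + ∑' n, τ (((n + 1)! ⁻¹ : 𝕂) • M ^ (n + 1)) := by
    intro M
    have hs := (expSeries_summable' (𝕂 := 𝕂) M).mapL τ
    rw [exp_eq_tsum 𝕂, τ.map_tsum (expSeries_summable' M), hs.tsum_eq_zero_add]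
    simp
  set R : NNReal := ‖A‖₊ + 1
  have hbound : ∀ n, ∀ M ∈ Metric.ball (0 : 𝔸) R,
      ‖Φ ((n ! ⁻¹ : 𝕂) • M ^ n)‖ ≤ ‖Φ‖ * (‖expSeries 𝕂 𝔸 n‖ * R ^ n) := by
    intro n M hM
    refine (Φ.le_opNorm _).trans (mul_le_mul_of_nonneg_left ?_ (norm_nonneg _))
    rw [← expSeries_apply_eq]
    have hMR : ‖M‖ ≤ R := (mem_ball_zero_iff.mp hM).le
    calc ‖expSeries 𝕂 𝔸 n fun _ => M‖ ≤ ‖expSeries 𝕂 𝔸 n‖ * ∏ _i : Fin n, ‖M‖ :=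
          (expSeries 𝕂 𝔸 n).le_opNorm _
      _ ≤ ‖expSeries 𝕂 𝔸 n‖ * R ^ n := by
          rw [Finset.prod_const, Finset.card_univ, Fintype.card_fin]
          gcongr
  have htsum := hasFDerivAt_tsum_of_isPreconnected
    (((expSeries 𝕂 𝔸).summable_norm_mul_pow (by simp [expSeries_radius_eq_top])).mul_left ‖Φ‖)
    Metric.isOpen_ball (convex_ball _ _).isPreconnected
    (fun n M _ => hasFDerivAt_trace_expSeries_succ τ hτ n M) hbound
    (Metric.mem_ball_self (by positivity)) (by simp) (by simp [R] : A ∈ Metric.ball 0 _)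
  rw [funext hexp]
  refine ((hasFDerivAt_const (τ 1) A).add htsum).congr_fderiv ?_
  rw [zero_add, exp_eq_tsum 𝕂]
  exact (Φ.map_tsum (expSeries_summable' A)).symm

end Tracial

theorem convPotential_differentiable_with_partials_general {p q : ℕ}
    (C : Fin q → Matrix (Fin p) (Fin p) ℂ) (b : Fin q → ℝ) :
    ∀ x : Fin q → ℝ, DifferentiableAt ℝ (convPotential C b) x ∧
      ∀ κ : Fin q, fderiv ℝ (convPotential C b) x (Pi.single κ 1) =
        (Matrix.trace (C κ * NormedSpace.exp (∑ ι, x ι • C ι))).re - b κ := by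
  intro x
  -- Any algebra norm inducing the product topology would do.
  let _ : NormedRing (Matrix (Fin p) (Fin p) ℂ) := Matrix.linftyOpNormedRing
  let _ : NormedAlgebra ℂ (Matrix (Fin p) (Fin p) ℂ) := Matrix.linftyOpNormedAlgebra
  let L := LinearMap.toContinuousLinearMap (Fintype.linearCombination ℝ C)
  let G := LinearMap.toContinuousLinearMap (Fintype.linearCombination ℝ b)
  let tr := LinearMap.toContinuousLinearMap (Matrix.traceLinearMap (Fin p) ℂ ℂ)
  have hfun : convPotential C b = Complex.reCLM ∘ (fun M => tr (exp M)) ∘ L - G := by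
    funext y
    simp [convPotential, L, G, tr, Fintype.linearCombination_apply]
  have hV : HasFDerivAt (convPotential C b)
      (Complex.reCLM.comp (((tr.comp ((mul ℂ _).flip (exp (L x)))).restrictScalars ℝ).comp L) - G)
      x := by
    rw [hfun]
    have htr := hasFDerivAt_trace_exp tr (fun M N => Matrix.trace_mul_comm M N) (L x)
    exact (Complex.reCLM.hasFDerivAt.comp x
      ((htr.restrictScalars ℝ).comp x L.hasFDerivAt)).sub G.hasFDerivAt
  refine ⟨hV.differentiableAt, fun κ => ?_⟩
  have hLκ : L (Pi.single κ 1) = C κ := by simp [L, Fintype.linearCombination_apply_single]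
  have hGκ : G (Pi.single κ 1) = b κ := by simp [G, Fintype.linearCombination_apply_single]
  rw [hV.fderiv]
  show (tr (L (Pi.single κ 1) * exp (L x))).re - G (Pi.single κ 1) = _
  rw [hLκ, hGκ]
  rfl

theorem convPotential_differentiable_with_partials {p q : ℕ} (hp : 0 < p) (hq : 0 < q)
    (C : Fin q → Matrix (Fin p) (Fin p) ℂ) (hC : ∀ ι, (C ι).IsHermitian) (b : Fin q → ℝ) :
    ∀ x : Fin q → ℝ, DifferentiableAt ℝ (convPotential C b) x ∧
      ∀ κ : Fin q, fderiv ℝ (convPotential C b) x (Pi.single κ 1) =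
        (Matrix.trace (C κ * NormedSpace.exp (∑ ι, x ι • C ι))).re - b κ :=
  convPotential_differentiable_with_partials_general C b
end

section
/- Let p, q be positive integers, let C(1), …, C(q) be selfadjoint (Hermitian) p×p complex matrices that are linearly independent over ℝ, and let b(1), …, b(q) be real numbers. Then the function V : ℝ^q → ℝ defined by V(x) = tr(exp(Σ_{ι=1}^q x(ι)·C(ι))) − Σ_{ι=1}^q x(ι)·b(ι) is strictly convex on ℝ^q. -/
open scoped Matrix

/-!
Since `x ↦ ∑ ι, x ι • C ι` is an injective `ℝ`-linear map into the Hermitian matrices and the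
subtracted term is linear, it suffices that `A ↦ re (tr (exp A))` is strictly convex on
Hermitian matrices. Conjugating by an eigenbasis of `H = s • A + t • B` we may assume `H`
diagonal, and then
`tr e^H = ∑ᵢ exp (s Aᵢᵢ + t Bᵢᵢ) ≤ s ∑ᵢ exp Aᵢᵢ + t ∑ᵢ exp Bᵢᵢ ≤ s tr e^A + t tr e^B`.
The second step is the Peierls inequality `∑ᵢ f Aᵢᵢ ≤ ∑ⱼ f λⱼ` for convex `f`: writing
`A = U D U*`, each `Aᵢᵢ` is the average of the eigenvalues `λⱼ` with the doubly stochastic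
weights `|Uᵢⱼ|²`, so it is Jensen's inequality row by row. For strictly convex `f`, equality in
it forces `A` to be diagonal, and equality in the first step forces the diagonals of `A` and `B`
to agree; so equality throughout gives `A = B`.
-/

open Matrix Finset

theorem StrictConvexOn.comp_linearMap_of_injective {𝕜 E F β : Type*} [Semiring 𝕜]
    [PartialOrder 𝕜] [AddCommMonoid E] [AddCommMonoid F] [Module 𝕜 E] [Module 𝕜 F]
    [AddCommMonoid β] [PartialOrder β] [SMul 𝕜 β] {f : F → β} {s : Set F}
    (hf : StrictConvexOn 𝕜 s f) {g : E →ₗ[𝕜] F} (hg : Function.Injective g) :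
    StrictConvexOn 𝕜 (g ⁻¹' s) (f ∘ g) :=
  ⟨hf.1.linear_preimage g, fun x hx y hy hxy a b ha hb hab => by
    simpa only [Function.comp_apply, map_add, map_smul] using
      hf.2 hx hy (hg.ne hxy) ha hb hab⟩

variable {𝕜 : Type*} [RCLike 𝕜] {n : Type*}

lemma RCLike.exp_ofReal (x : ℝ) : NormedSpace.exp (x : 𝕜) = (Real.exp x : 𝕜) := by
  rw [Real.exp_eq_exp_ℝ, ← RCLike.ofRealAm_coe]
  exact (NormedSpace.map_exp _
    (RCLike.ofRealAm_coe (K := 𝕜) ▸ RCLike.continuous_ofReal) x).symm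

namespace Matrix

lemma IsHermitian.smul_add_smul {A B : Matrix n n 𝕜} (hA : A.IsHermitian) (hB : B.IsHermitian)
    (s t : ℝ) : (s • A + t • B).IsHermitian :=
  (selfAdjoint.submodule ℝ _).add_mem (Submodule.smul_mem _ s hA) (Submodule.smul_mem _ t hB)

theorem IsHermitian.eq_diagonal_re_of_isDiag [DecidableEq n] {A : Matrix n n 𝕜}
    (hA : A.IsHermitian) (hd : A.IsDiag) : A = diagonal fun i => (RCLike.re (A i i) : 𝕜) :=
  hd.diagonal_diag.symm.trans (congrArg diagonal hA.coe_re_diag.symm)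

variable [Fintype n] [DecidableEq n]

lemma mul_diagonal_mul_star_apply (U : Matrix n n 𝕜) (d : n → 𝕜) (i k : n) :
    (U * diagonal d * star U) i k = ∑ j, U i j * d j * star (U k j) := by
  rw [mul_apply]
  simp only [mul_diagonal, star_apply]

lemma sum_norm_sq_apply_right_eq_one {U : Matrix n n 𝕜} (hU : U ∈ unitaryGroup n 𝕜) (i : n) :
    ∑ j, ‖U i j‖ ^ 2 = 1 := by
  have h := congr_fun₂ (mem_unitaryGroup_iff.mp hU) i i
  simp only [mul_apply, star_apply, ← starRingEnd_apply, RCLike.mul_conj, one_apply_eq] at h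
  exact_mod_cast h

lemma sum_norm_sq_apply_left_eq_one {U : Matrix n n 𝕜} (hU : U ∈ unitaryGroup n 𝕜) (j : n) :
    ∑ i, ‖U i j‖ ^ 2 = 1 := by
  have h := congr_fun₂ (mem_unitaryGroup_iff'.mp hU) j j
  simp only [mul_apply, star_apply, ← starRingEnd_apply, RCLike.conj_mul, one_apply_eq] at h
  exact_mod_cast h

lemma sum_sum_norm_sq_mul {U : Matrix n n 𝕜} (hU : U ∈ unitaryGroup n 𝕜) (g : n → ℝ) :
    ∑ i, ∑ j, ‖U i j‖ ^ 2 * g j = ∑ j, g j := by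
  rw [sum_comm]
  simp only [← sum_mul, sum_norm_sq_apply_left_eq_one hU, one_mul]

lemma trace_exp_unitary_conj (u : unitary (Matrix n n 𝕜)) (A : Matrix n n 𝕜) :
    trace (NormedSpace.exp ((u : Matrix n n 𝕜) * A * (star u : Matrix n n 𝕜))) =
      trace (NormedSpace.exp A) := by
  have hinv : (u : Matrix n n 𝕜)⁻¹ = star (u : Matrix n n 𝕜) :=
    inv_eq_right_inv (Unitary.mul_star_self_of_mem u.2)
  rw [← hinv, exp_conj _ A Unitary.isUnit_coe, trace_mul_cycle, hinv,
    Unitary.star_mul_self_of_mem u.2, one_mul]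

lemma re_trace_exp_diagonal (d : n → ℝ) :
    RCLike.re (trace (NormedSpace.exp (diagonal fun i => (d i : 𝕜)))) =
      ∑ i, Real.exp (d i) := by
  simp only [exp_diagonal, trace_diagonal, map_sum, Pi.exp_def, RCLike.exp_ofReal,
    RCLike.ofReal_re]

namespace IsHermitian

variable {A B : Matrix n n 𝕜} {f : ℝ → ℝ}

lemma eq_eigenvectorUnitary_mul_diagonal_mul_star (hA : A.IsHermitian) :
    A = (hA.eigenvectorUnitary : Matrix n n 𝕜) * diagonal (RCLike.ofReal ∘ hA.eigenvalues) *
      star (hA.eigenvectorUnitary : Matrix n n 𝕜) := by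
  conv_lhs => rw [hA.spectral_theorem, Unitary.conjStarAlgAut_apply]

lemma re_apply_self_eq_sum (hA : A.IsHermitian) (i : n) :
    RCLike.re (A i i) =
      ∑ j, ‖(hA.eigenvectorUnitary : Matrix n n 𝕜) i j‖ ^ 2 * hA.eigenvalues j := by
  conv_lhs => rw [hA.eq_eigenvectorUnitary_mul_diagonal_mul_star, mul_diagonal_mul_star_apply]
  simp only [Function.comp_apply, RCLike.star_def, mul_right_comm _ (RCLike.ofReal _),
    RCLike.mul_conj, map_sum]
  norm_cast

lemma map_re_apply_self_le (hA : A.IsHermitian) (hf : ConvexOn ℝ Set.univ f) (i : n) :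
    f (RCLike.re (A i i)) ≤
      ∑ j, ‖(hA.eigenvectorUnitary : Matrix n n 𝕜) i j‖ ^ 2 * f (hA.eigenvalues j) := by
  rw [hA.re_apply_self_eq_sum]
  simpa only [smul_eq_mul] using hf.map_sum_le (fun j _ => sq_nonneg _)
    (sum_norm_sq_apply_right_eq_one hA.eigenvectorUnitary.2 i) (fun _ _ => Set.mem_univ _)

theorem sum_map_re_apply_self_le (hA : A.IsHermitian) (hf : ConvexOn ℝ Set.univ f) :
    ∑ i, f (RCLike.re (A i i)) ≤ ∑ i, f (hA.eigenvalues i) :=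
  calc ∑ i, f (RCLike.re (A i i))
      ≤ ∑ i, ∑ j, ‖(hA.eigenvectorUnitary : Matrix n n 𝕜) i j‖ ^ 2 * f (hA.eigenvalues j) :=
        sum_le_sum fun i _ => hA.map_re_apply_self_le hf i
    _ = ∑ i, f (hA.eigenvalues i) := sum_sum_norm_sq_mul hA.eigenvectorUnitary.2 _

theorem isDiag_of_sum_map_re_apply_self_eq (hA : A.IsHermitian)
    (hf : StrictConvexOn ℝ Set.univ f)
    (h : ∑ i, f (RCLike.re (A i i)) = ∑ i, f (hA.eigenvalues i)) : A.IsDiag := by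
  set U := (hA.eigenvectorUnitary : Matrix n n 𝕜)
  have hU : U ∈ unitaryGroup n 𝕜 := hA.eigenvectorUnitary.2
  have hrow : ∀ k, f (RCLike.re (A k k)) = ∑ j, ‖U k j‖ ^ 2 * f (hA.eigenvalues j) := by
    rw [← sum_sum_norm_sq_mul hU (fun j => f (hA.eigenvalues j))] at h
    exact fun k => (sum_eq_sum_iff_of_le fun k _ => hA.map_re_apply_self_le hf.convexOn k).mp h k
      (mem_univ k)
  -- equality in Jensen's inequality for row `k`
  have heig : ∀ k j, U k j ≠ 0 → (hA.eigenvalues j : 𝕜) = A k k := by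
    intro k j hkj
    have hk := hrow k
    rw [hA.re_apply_self_eq_sum] at hk
    rw [← hA.coe_re_apply_self, hA.re_apply_self_eq_sum]
    congr 1
    simpa only [smul_eq_mul] using (hf.map_sum_eq_iff' (fun j _ => sq_nonneg _)
      (sum_norm_sq_apply_right_eq_one hU k) (fun _ _ => Set.mem_univ _)).mp
      (by simpa only [smul_eq_mul] using hk) j (mem_univ j) (by positivity)
  intro i k hik
  have hterm : ∀ j, U i j * (RCLike.ofReal ∘ hA.eigenvalues) j * star (U k j) =
      U i j * star (U k j) * A k k := by
    intro j
    by_cases hkj : U k j = 0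
    · simp [hkj]
    · rw [Function.comp_apply, heig k j hkj, mul_right_comm]
  conv_lhs => rw [hA.eq_eigenvectorUnitary_mul_diagonal_mul_star, mul_diagonal_mul_star_apply]
  rw [sum_congr rfl fun j _ => hterm j, ← sum_mul]
  simp only [← star_apply, ← mul_apply, mem_unitaryGroup_iff.mp hU, one_apply_ne hik, zero_mul]

lemma re_trace_exp_s3 (hA : A.IsHermitian) :
    RCLike.re (trace (NormedSpace.exp A)) = ∑ i, Real.exp (hA.eigenvalues i) := by
  conv_lhs => rw [hA.eq_eigenvectorUnitary_mul_diagonal_mul_star, trace_exp_unitary_conj]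
  exact re_trace_exp_diagonal _

lemma re_trace_exp_of_isDiag (hA : A.IsHermitian) (hd : A.IsDiag) :
    RCLike.re (trace (NormedSpace.exp A)) = ∑ i, Real.exp (RCLike.re (A i i)) := by
  conv_lhs => rw [hA.eq_diagonal_re_of_isDiag hd]
  exact re_trace_exp_diagonal _

lemma sum_exp_re_apply_self_le_re_trace_exp (hA : A.IsHermitian) :
    ∑ i, Real.exp (RCLike.re (A i i)) ≤ RCLike.re (trace (NormedSpace.exp A)) :=
  hA.re_trace_exp_s3 ▸ hA.sum_map_re_apply_self_le convexOn_exp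

lemma sum_exp_re_apply_self_lt_re_trace_exp (hA : A.IsHermitian) (hnd : ¬A.IsDiag) :
    ∑ i, Real.exp (RCLike.re (A i i)) < RCLike.re (trace (NormedSpace.exp A)) :=
  hA.sum_exp_re_apply_self_le_re_trace_exp.lt_of_ne fun h => hnd <|
    hA.isDiag_of_sum_map_re_apply_self_eq strictConvexOn_exp (h.trans hA.re_trace_exp_s3)

theorem re_trace_exp_smul_add_smul_lt_of_isDiag (hA : A.IsHermitian) (hB : B.IsHermitian)
    (hAB : A ≠ B) {s t : ℝ} (hs : 0 < s) (ht : 0 < t) (hst : s + t = 1)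
    (hd : (s • A + t • B).IsDiag) :
    RCLike.re (trace (NormedSpace.exp (s • A + t • B))) <
      s * RCLike.re (trace (NormedSpace.exp A)) + t * RCLike.re (trace (NormedSpace.exp B)) := by
  set a := fun i => RCLike.re (A i i)
  set b := fun i => RCLike.re (B i i)
  have hexp_le (i : n) :
      Real.exp (s * a i + t * b i) ≤ s * Real.exp (a i) + t * Real.exp (b i) := by
    simpa only [smul_eq_mul] using
      convexOn_exp.2 (Set.mem_univ (a i)) (Set.mem_univ (b i)) hs.le ht.le hst
  have hsum : ∑ i, (s * Real.exp (a i) + t * Real.exp (b i)) =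
      s * ∑ i, Real.exp (a i) + t * ∑ i, Real.exp (b i) := by
    rw [sum_add_distrib, mul_sum, mul_sum]
  rw [(hA.smul_add_smul hB s t).re_trace_exp_of_isDiag hd]
  simp only [add_apply, smul_apply, map_add, RCLike.smul_re]
  by_cases hdiag : A.IsDiag ∧ B.IsDiag
  · obtain ⟨i, hi⟩ : ∃ i, a i ≠ b i := by
      by_contra! h
      refine hAB ((hA.eq_diagonal_re_of_isDiag hdiag.1).trans ?_)
      rw [hB.eq_diagonal_re_of_isDiag hdiag.2]
      exact congrArg diagonal (funext fun i => congrArg _ (h i))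
    have hexp_lt : Real.exp (s * a i + t * b i) < s * Real.exp (a i) + t * Real.exp (b i) := by
      simpa only [smul_eq_mul] using
        strictConvexOn_exp.2 (Set.mem_univ (a i)) (Set.mem_univ (b i)) hi hs ht hst
    calc ∑ i, Real.exp (s * a i + t * b i)
        < ∑ i, (s * Real.exp (a i) + t * Real.exp (b i)) :=
          sum_lt_sum (fun i _ => hexp_le i) ⟨i, mem_univ i, hexp_lt⟩
      _ = _ := by rw [hsum, hA.re_trace_exp_of_isDiag hdiag.1, hB.re_trace_exp_of_isDiag hdiag.2]
  · have hA_le := mul_le_mul_of_nonneg_left hA.sum_exp_re_apply_self_le_re_trace_exp hs.le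
    have hB_le := mul_le_mul_of_nonneg_left hB.sum_exp_re_apply_self_le_re_trace_exp ht.le
    calc ∑ i, Real.exp (s * a i + t * b i)
        ≤ ∑ i, (s * Real.exp (a i) + t * Real.exp (b i)) := sum_le_sum fun i _ => hexp_le i
      _ = s * ∑ i, Real.exp (a i) + t * ∑ i, Real.exp (b i) := hsum
      _ < _ := by
        rcases not_and_or.mp hdiag with hnA | hnB
        · exact add_lt_add_of_lt_of_le
            (mul_lt_mul_of_pos_left (hA.sum_exp_re_apply_self_lt_re_trace_exp hnA) hs) hB_le
        · exact add_lt_add_of_le_of_lt hA_le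
            (mul_lt_mul_of_pos_left (hB.sum_exp_re_apply_self_lt_re_trace_exp hnB) ht)

end IsHermitian

theorem strictConvexOn_re_trace_exp :
    StrictConvexOn ℝ {A : Matrix n n 𝕜 | A.IsHermitian}
      fun A => RCLike.re (trace (NormedSpace.exp A)) := by
  refine ⟨(selfAdjoint.submodule ℝ (Matrix n n 𝕜)).convex,
    fun A hA B hB hAB s t hs ht hst => ?_⟩
  have hH : (s • A + t • B).IsHermitian := IsHermitian.smul_add_smul hA hB s t
  set φ := Unitary.conjStarAlgAut ℝ (Matrix n n 𝕜) (star hH.eigenvectorUnitary)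
  have hφ (X : Matrix n n 𝕜) :
      RCLike.re (trace (NormedSpace.exp (φ X))) = RCLike.re (trace (NormedSpace.exp X)) := by
    rw [Unitary.conjStarAlgAut_apply, trace_exp_unitary_conj]
  have hd : (s • φ A + t • φ B).IsDiag := by
    rw [← map_smul, ← map_smul, ← map_add, show φ (s • A + t • B) =
      Unitary.conjStarAlgAut 𝕜 _ (star hH.eigenvectorUnitary) (s • A + t • B) from rfl,
      hH.conjStarAlgAut_star_eigenvectorUnitary]
    exact isDiag_diagonal _
  have hφA : (φ A).IsHermitian := IsSelfAdjoint.map hA φ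
  have hφB : (φ B).IsHermitian := IsSelfAdjoint.map hB φ
  simpa only [hφ, ← map_smul, ← map_add, smul_eq_mul] using
    hφA.re_trace_exp_smul_add_smul_lt_of_isDiag hφB (φ.injective.ne hAB) hs ht hst hd

end Matrix

theorem convPotential_strictConvex_general {p q : ℕ}
    (C : Fin q → Matrix (Fin p) (Fin p) ℂ) (hC : ∀ ι, (C ι).IsHermitian)
    (hind : LinearIndependent ℝ C) (b : Fin q → ℝ) :
    StrictConvexOn ℝ Set.univ (convPotential C b) := by
  have hherm : Set.univ ⊆ Fintype.linearCombination ℝ C ⁻¹' {A | A.IsHermitian} :=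
    fun x _ => by
      rw [Set.mem_preimage, Fintype.linearCombination_apply]
      exact (selfAdjoint.submodule ℝ _).sum_mem fun ι _ => Submodule.smul_mem _ (x ι) (hC ι)
  have htrace := ((strictConvexOn_re_trace_exp (𝕜 := ℂ) (n := Fin p)).comp_linearMap_of_injective
    hind.fintypeLinearCombination_injective).subset hherm convex_univ
  have hlin := (Fintype.linearCombination ℝ b).concaveOn convex_univ
  have hV : convPotential C b = (fun A => RCLike.re (trace (NormedSpace.exp A))) ∘
      Fintype.linearCombination ℝ C - Fintype.linearCombination ℝ b := by
    ext x
    simp only [convPotential, Pi.sub_apply, Function.comp_apply, Fintype.linearCombination_apply,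
      smul_eq_mul]
    rfl
  rw [hV]
  exact htrace.sub_concaveOn hlin

theorem convPotential_strictConvex {p q : ℕ} (hp : 0 < p) (hq : 0 < q)
    (C : Fin q → Matrix (Fin p) (Fin p) ℂ) (hC : ∀ ι, (C ι).IsHermitian)
    (hind : LinearIndependent ℝ C) (b : Fin q → ℝ) :
    StrictConvexOn ℝ Set.univ (convPotential C b) :=
  convPotential_strictConvex_general C hC hind b
end

section
/- Let p, q be positive integers and let C(1), …, C(q) be selfadjoint (Hermitian) p×p complex matrices that are linearly independent over ℝ and whose real linear span contains a positive definite matrix; let b(1), …, b(q) be real numbers. Then there exists a positive definite matrix X ∈ M_p(ℂ) with tr(C(ι)·X) = b(ι) for all ι = 1, …, q if and only if for every nonzero x ∈ ℝ^q such that Σ_{ι=1}^q x(ι)·C(ι) is positive semidefinite one has Σ_{ι=1}^q b(ι)·x(ι) > 0. -/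
/-!
The map `T X = (Re tr (Cᵢ X))ᵢ` sends the positive definite cone onto an open convex cone
`S ⊆ ℝ^q`: linear independence of the hermitian `Cᵢ` makes `T` bijective already on their real
span, and positive definiteness survives small hermitian perturbations. The condition on `b` says
that `b` pairs positively with every nonzero `x` in the dual cone `{x | ∑ xᵢ Cᵢ ≥ 0}` of `S`.
It is necessary since `tr (A X) > 0` for `A ≥ 0` nonzero and `X > 0`. It is sufficient since a
hyperplane separating `b ∉ S` from `S` has its normal in that dual cone, the positive semidefinite
cone being self-dual for the trace pairing, and pairs non-positively with `b`.
-/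

open scoped Matrix ComplexOrder

namespace Matrix

variable {n ι : Type*}

theorem convex_setOf_posDef : Convex ℝ {X : Matrix n n ℂ | X.PosDef} :=
  convex_iff_forall_pos.mpr fun _ hX _ hY _ _ ha hb _ => (hX.smul ha).add (hY.smul hb)

theorem isHermitian_sum_smul [Fintype ι] {C : ι → Matrix n n ℂ} (hC : ∀ i, (C i).IsHermitian)
    (x : ι → ℝ) : (∑ i, x i • C i).IsHermitian :=
  isSelfAdjoint_sum _ fun i _ => (hC i).smul (IsSelfAdjoint.all (x i))

variable [Fintype n]

open scoped MatrixOrder in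
theorem trace_mul_pos_of_posSemidef_of_posDef [DecidableEq n] {A X : Matrix n n ℂ}
    (hA : A.PosSemidef) (hA0 : A ≠ 0) (hX : X.PosDef) : 0 < (A * X).trace := by
  set R := CFC.sqrt X
  have hRR : R * R = X := CFC.sqrt_mul_sqrt_self X hX.posSemidef.nonneg
  have hRh : Rᴴ = R := (nonneg_iff_posSemidef.mp (CFC.sqrt_nonneg X)).isHermitian
  have hR : IsUnit R := CFC.isUnit_sqrt_iff_isStrictlyPositive.mpr hX.isStrictlyPositive
  have hconj : (A * X).trace = (R * A * Rᴴ).trace := by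
    rw [hRh, ← hRR, ← mul_assoc, trace_mul_comm, ← mul_assoc]
  have hpsd : (R * A * Rᴴ).PosSemidef := hA.mul_mul_conjTranspose_same R
  have hne : R * A * Rᴴ ≠ 0 := by
    rwa [hRh, mul_assoc, Ne, hR.mul_right_eq_zero, hR.mul_left_eq_zero]
  rw [hconj]
  exact hpsd.trace_nonneg.lt_of_ne' (mt hpsd.trace_eq_zero_iff.mp hne)

theorem IsHermitian.im_trace_mul {A B : Matrix n n ℂ} (hA : A.IsHermitian) (hB : B.IsHermitian) :
    (A * B).trace.im = 0 := by
  refine Complex.conj_eq_iff_im.mp ?_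
  rw [← Complex.star_def, ← trace_conjTranspose, conjTranspose_mul, hA.eq, hB.eq, trace_mul_comm]

theorem IsHermitian.posDef_of_forall_mem_sphere {M : Matrix n n ℂ} (hM : M.IsHermitian)
    (h : ∀ v ∈ Metric.sphere (0 : n → ℂ) 1, 0 < (star v ⬝ᵥ M *ᵥ v).re) : M.PosDef := by
  refine PosDef.of_dotProduct_mulVec_pos hM fun v hv => RCLike.pos_iff.mpr
    ⟨?_, hM.im_star_dotProduct_mulVec_self v⟩
  have hv' : 0 < ‖v‖ := norm_pos_iff.mpr hv
  have hu := h ((‖v‖⁻¹ : ℂ) • v) (by simp [norm_smul, hv'.ne'])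
  have hscale : star ((‖v‖⁻¹ : ℂ) • v) ⬝ᵥ M *ᵥ ((‖v‖⁻¹ : ℂ) • v)
      = ((‖v‖ ^ 2)⁻¹ : ℝ) * (star v ⬝ᵥ M *ᵥ v) := by
    rw [star_smul, mulVec_smul, dotProduct_smul, smul_dotProduct]
    simp [smul_eq_mul, ← mul_assoc, sq]
  rw [hscale, Complex.re_ofReal_mul] at hu
  exact pos_of_mul_pos_right hu (by positivity)

theorem isOpen_setOf_posDef {α : Type*} [TopologicalSpace α] {f : α → Matrix n n ℂ}
    (hf : Continuous f) (hherm : ∀ a, (f a).IsHermitian) : IsOpen {a | (f a).PosDef} := by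
  refine isOpen_iff_eventually.mpr fun a₀ ha₀ => ?_
  have hquad : Continuous fun z : α × (n → ℂ) => (star z.2 ⬝ᵥ f z.1 *ᵥ z.2).re := by
    fun_prop
  have hpos := (isCompact_sphere (0 : n → ℂ) 1).eventually_forall_of_forall_eventually
    (P := fun a v => 0 < (star v ⬝ᵥ f a *ᵥ v).re) fun v hv =>
      (isOpen_lt continuous_const hquad).mem_nhds
        (ha₀.re_dotProduct_pos (ne_zero_of_mem_unit_sphere ⟨v, by simpa using hv⟩))
  exact hpos.mono fun a ha => (hherm a).posDef_of_forall_mem_sphere ha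

theorem IsHermitian.posSemidef_of_forall_re_trace_mul_nonneg {A : Matrix n n ℂ}
    (hA : A.IsHermitian) (h : ∀ Y : Matrix n n ℂ, Y.PosSemidef → 0 ≤ (A * Y).trace.re) :
    A.PosSemidef := by
  refine PosSemidef.of_dotProduct_mulVec_nonneg hA fun v => RCLike.nonneg_iff.mpr
    ⟨?_, hA.im_star_dotProduct_mulVec_self v⟩
  simpa [mul_vecMulVec, dotProduct_comm] using h _ (posSemidef_vecMulVec_self_star v)

theorem le_re_trace_mul_of_forall_posDef_lt [DecidableEq n] {A Y : Matrix n n ℂ} {c : ℝ}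
    (h : ∀ X : Matrix n n ℂ, X.PosDef → c < (A * X).trace.re) (hY : Y.PosSemidef) :
    c ≤ (A * Y).trace.re := by
  have hlim : Filter.Tendsto (fun ε : ℝ => (A * (Y + ε • 1)).trace.re)
      (nhdsWithin 0 (Set.Ioi 0)) (nhds (A * Y).trace.re) := by
    refine tendsto_nhdsWithin_of_tendsto_nhds ?_
    have : Continuous fun ε : ℝ => (A * (Y + ε • 1)).trace.re := by fun_prop
    simpa using this.tendsto 0
  exact ge_of_tendsto hlim (eventually_nhdsWithin_of_forall fun ε hε =>
    (h _ (PosDef.posSemidef_add hY (PosDef.one.smul hε))).le)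

theorem re_trace_mul_nonneg_of_forall_posDef_lt [DecidableEq n] {A Y : Matrix n n ℂ} {c : ℝ}
    (h : ∀ X : Matrix n n ℂ, X.PosDef → c < (A * X).trace.re) (hY : Y.PosSemidef) :
    0 ≤ (A * Y).trace.re := by
  by_contra! hneg
  set t := (|c| + 1) / -(A * Y).trace.re
  have ht : 0 ≤ t := div_nonneg (by positivity) (by linarith)
  have hle := le_re_trace_mul_of_forall_posDef_lt h (hY.smul ht)
  rw [mul_smul_comm, trace_smul, Complex.smul_re, smul_eq_mul,
    div_mul_eq_mul_div, le_div_iff₀ (by linarith)] at hle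
  nlinarith [mul_pos (show 0 < c + |c| + 1 by linarith [neg_abs_le c]) (neg_pos.mpr hneg)]

/-- Taking real parts makes this `ℝ`-linear; for hermitian `C i` and `X` it loses nothing. -/
def traceMap (C : ι → Matrix n n ℂ) : Matrix n n ℂ →ₗ[ℝ] ι → ℝ where
  toFun X i := (C i * X).trace.re
  map_add' X Y := by ext i; simp [mul_add]
  map_smul' r X := by ext i; simp

@[simp]
theorem traceMap_apply (C : ι → Matrix n n ℂ) (X : Matrix n n ℂ) (i : ι) :
    traceMap C X i = (C i * X).trace.re := rfl

theorem traceMap_eq_iff {C : ι → Matrix n n ℂ} (hC : ∀ i, (C i).IsHermitian) {X : Matrix n n ℂ}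
    (hX : X.IsHermitian) (b : ι → ℝ) :
    traceMap C X = b ↔ ∀ i, (C i * X).trace = b i := by
  refine funext_iff.trans (forall_congr' fun i => ?_)
  rw [traceMap_apply, Complex.ext_iff, (hC i).im_trace_mul hX]
  simp

variable [Fintype ι]

theorem sum_traceMap_mul (C : ι → Matrix n n ℂ) (X : Matrix n n ℂ) (x : ι → ℝ) :
    ∑ i, traceMap C X i * x i = ((∑ i, x i • C i) * X).trace.re := by
  simp [Finset.sum_mul, trace_sum, mul_comm]

theorem injective_traceMap_comp_linearCombination {C : ι → Matrix n n ℂ}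
    (hC : ∀ i, (C i).IsHermitian) (hind : LinearIndependent ℝ C) :
    Function.Injective (traceMap C ∘ₗ Fintype.linearCombination ℝ C) := by
  refine (injective_iff_map_eq_zero _).mpr fun w hw => hind.fintypeLinearCombination_injective ?_
  set A := Fintype.linearCombination ℝ C w
  have hA : A = ∑ i, w i • C i := Fintype.linearCombination_apply ℝ C w
  have hAh : A.IsHermitian := hA ▸ isHermitian_sum_smul hC w
  have hre : (A * A).trace.re = 0 := by
    nth_rw 1 [hA]
    rw [← sum_traceMap_mul, show traceMap C A = 0 from hw]
    simp
  rw [map_zero, ← trace_mul_conjTranspose_self_eq_zero_iff, hAh.eq]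
  exact Complex.ext hre (hAh.im_trace_mul hAh)

theorem isOpen_image_traceMap_posDef {C : ι → Matrix n n ℂ} (hC : ∀ i, (C i).IsHermitian)
    (hind : LinearIndependent ℝ C) : IsOpen (traceMap C '' {X | X.PosDef}) := by
  rw [isOpen_iff_mem_nhds]
  rintro _ ⟨X₀, hX₀, rfl⟩
  set L := Fintype.linearCombination ℝ C
  have hsurj : Function.Surjective (traceMap C ∘ₗ L) :=
    LinearMap.injective_iff_surjective.mp (injective_traceMap_comp_linearCombination hC hind)
  have hLherm : ∀ w, (L w).IsHermitian := fun w => by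
    simpa [L, Fintype.linearCombination_apply] using isHermitian_sum_smul hC w
  have hW : IsOpen {w | (X₀ + L w).PosDef} :=
    isOpen_setOf_posDef (continuous_const.add L.continuous_of_finiteDimensional) fun w =>
      hX₀.isHermitian.add (hLherm w)
  have hopen : IsOpenMap fun w => traceMap C (X₀ + L w) := by
    simp only [map_add]
    exact (isOpenMap_add_left _).comp ((traceMap C ∘ₗ L).isOpenMap_of_finiteDimensional hsurj)
  refine Filter.mem_of_superset ((hopen _ hW).mem_nhds ⟨0, by simpa using hX₀, by simp⟩) ?_
  rintro _ ⟨w, hw, rfl⟩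
  exact ⟨_, hw, rfl⟩

theorem sum_traceMap_mul_pos [DecidableEq n] {C : ι → Matrix n n ℂ} (hind : LinearIndependent ℝ C)
    {X : Matrix n n ℂ} (hX : X.PosDef) {x : ι → ℝ} (hx : x ≠ 0)
    (hpsd : (∑ i, x i • C i).PosSemidef) : 0 < ∑ i, traceMap C X i * x i := by
  have hA0 : ∑ i, x i • C i ≠ 0 := fun h => hx (funext (Fintype.linearIndependent_iff.mp hind x h))
  rw [sum_traceMap_mul]
  exact (RCLike.pos_iff.mp (trace_mul_pos_of_posSemidef_of_posDef hpsd hA0 hX)).1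

theorem mem_image_traceMap_posDef [DecidableEq n] {C : ι → Matrix n n ℂ}
    (hC : ∀ i, (C i).IsHermitian) (hind : LinearIndependent ℝ C) {b : ι → ℝ}
    (hb : ∀ x : ι → ℝ, x ≠ 0 → (∑ i, x i • C i).PosSemidef → 0 < ∑ i, b i * x i) :
    b ∈ traceMap C '' {X | X.PosDef} := by
  classical
  by_contra hbS
  obtain ⟨f, hf⟩ := geometric_hahn_banach_open_point
    (convex_setOf_posDef.linear_image (traceMap C)) (isOpen_image_traceMap_posDef hC hind) hbS
  set x : ι → ℝ := fun i => -f (Pi.single i 1)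
  have hfx : ∀ y, f y = -∑ i, y i * x i := fun y => by
    conv_lhs => rw [pi_eq_sum_univ' y]
    simp [x]
  have hlt : ∀ X : Matrix n n ℂ, X.PosDef → -f b < ((∑ i, x i • C i) * X).trace.re :=
    fun X hX => by
      have hfX := hf _ ⟨X, hX, rfl⟩
      rw [hfx (traceMap C X), sum_traceMap_mul] at hfX
      linarith
  have hpsd : (∑ i, x i • C i).PosSemidef :=
    (isHermitian_sum_smul hC x).posSemidef_of_forall_re_trace_mul_nonneg fun _ hY =>
      re_trace_mul_nonneg_of_forall_posDef_lt hlt hY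
  have hx : x ≠ 0 := by
    rintro hx0
    simpa [hfx, hx0] using hf _ ⟨1, PosDef.one, rfl⟩
  have hfb : 0 ≤ f b := by simpa using le_re_trace_mul_of_forall_posDef_lt hlt PosSemidef.zero
  have hbx := hb x hx hpsd
  rw [hfx] at hfb
  linarith

end Matrix

open Matrix

theorem pd_solution_iff_pos_functional_general {p q : ℕ}
    (C : Fin q → Matrix (Fin p) (Fin p) ℂ) (hC : ∀ ι, (C ι).IsHermitian)
    (hind : LinearIndependent ℝ C)
    (b : Fin q → ℝ) :
    (∃ X : Matrix (Fin p) (Fin p) ℂ, X.PosDef ∧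
        ∀ ι, Matrix.trace (C ι * X) = (b ι : ℂ)) ↔
      ∀ x : Fin q → ℝ, x ≠ 0 → (∑ ι, x ι • C ι).PosSemidef → 0 < ∑ ι, b ι * x ι := by
  constructor
  · rintro ⟨X, hX, hXb⟩ x hx hpsd
    rw [← (traceMap_eq_iff hC hX.isHermitian b).mpr hXb]
    exact sum_traceMap_mul_pos hind hX hx hpsd
  · intro hb
    obtain ⟨X, hX, hXb⟩ := mem_image_traceMap_posDef hC hind hb
    exact ⟨X, hX, (traceMap_eq_iff hC hX.isHermitian b).mp hXb⟩

theorem pd_solution_iff_pos_functional {p q : ℕ} (hp : 0 < p) (hq : 0 < q)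
    (C : Fin q → Matrix (Fin p) (Fin p) ℂ) (hC : ∀ ι, (C ι).IsHermitian)
    (hind : LinearIndependent ℝ C)
    (hspan : ∃ D : Matrix (Fin p) (Fin p) ℂ,
      D ∈ Submodule.span ℝ (Set.range C) ∧ D.PosDef)
    (b : Fin q → ℝ) :
    (∃ X : Matrix (Fin p) (Fin p) ℂ, X.PosDef ∧
        ∀ ι, Matrix.trace (C ι * X) = (b ι : ℂ)) ↔
      ∀ x : Fin q → ℝ, x ≠ 0 → (∑ ι, x ι • C ι).PosSemidef → 0 < ∑ ι, b ι * x ι :=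
  pd_solution_iff_pos_functional_general C hC hind b
end

section
/- Let M be a finite-dimensional real vector space, let C ⊆ M be a closed convex cone with C ∩ (−C) = {0}, let S ⊆ M be a linear subspace, and let l : S → ℝ be a linear functional such that l(s) > 0 for every nonzero s ∈ S ∩ C. Then there exists a linear functional L : M → ℝ extending l such that L(m) > 0 for every nonzero m ∈ C. -/
/-!
By compactness of `C ∩ sphere 0 1` it suffices to find, for each `b ∈ C \ {0}`, an extension of
`l` that is nonnegative on `C` and positive at `b`: the mean of finitely many of them is then
positive on the whole sphere. Such an extension comes from separating the segment from `(-b, 0)`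
to `(0, -1)` from the cone `{(c - s, l s) | c ∈ C, s ∈ S}` in `M × ℝ`. That cone is closed because
`(c, s) ↦ (c - s, l s)` vanishes on `C × S` only at `0`, so its norm is bounded below by a
multiple of `‖(c, s)‖` there.
-/

open Metric Set

theorem PointedCone.inv_norm_smul_mem_sphere {E : Type*} [NormedAddCommGroup E]
    [NormedSpace ℝ E] (K : PointedCone ℝ E) {x : E} (hx : x ∈ K)
    (hx0 : x ≠ 0) : ‖x‖⁻¹ • x ∈ (K : Set E) ∩ sphere 0 1 :=
  ⟨K.smul_mem (by positivity) hx, by simp [norm_smul, hx0]⟩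

section ConeImage
variable {E F : Type*} [NormedAddCommGroup E] [NormedSpace ℝ E] [FiniteDimensional ℝ E]
  [NormedAddCommGroup F] [NormedSpace ℝ F]

theorem PointedCone.exists_pos_mul_norm_le_norm_apply (K : PointedCone ℝ E)
    (hK : IsClosed (K : Set E)) (T : E →ₗ[ℝ] F) (hT : ∀ x ∈ K, T x = 0 → x = 0) :
    ∃ m > 0, ∀ x ∈ K, m * ‖x‖ ≤ ‖T x‖ := by
  obtain ⟨m, hm, hmT⟩ := ((isCompact_sphere (0 : E) 1).inter_left hK).exists_forall_le'
    (T.continuous_of_finiteDimensional.norm.continuousOn) (a := 0) fun x hx =>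
      norm_pos_iff.2 fun h => by simpa [hT x hx.1 h] using hx.2
  refine ⟨m, hm, fun x hx => ?_⟩
  rcases eq_or_ne x 0 with rfl | hx0
  · simp
  have := hmT _ (K.inv_norm_smul_mem_sphere hx hx0)
  rwa [map_smul, norm_smul, norm_inv, norm_norm, inv_mul_eq_div,
    le_div_iff₀ (norm_pos_iff.2 hx0)] at this

theorem PointedCone.isClosed_map (K : PointedCone ℝ E) (hK : IsClosed (K : Set E))
    (T : E →ₗ[ℝ] F) (hT : ∀ x ∈ K, T x = 0 → x = 0) : IsClosed (K.map T : Set F) := by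
  obtain ⟨m, hm, hmT⟩ := K.exists_pos_mul_norm_le_norm_apply hK T hT
  rw [PointedCone.coe_map]
  refine isClosed_of_closure_subset fun y hy => ?_
  set R := (‖y‖ + 1) / m
  have hcpt : IsCompact (T '' ((K : Set E) ∩ closedBall 0 R)) :=
    ((isCompact_closedBall 0 R).inter_left hK).image T.continuous_of_finiteDimensional
  have hy' : y ∈ closure (T '' ((K : Set E) ∩ closedBall 0 R)) := by
    refine closure_mono ?_ (isOpen_ball.inter_closure ⟨mem_ball_zero_iff.2 (lt_add_one _), hy⟩)
    rintro _ ⟨hz, x, hx, rfl⟩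
    refine ⟨x, ⟨hx, mem_closedBall_zero_iff.2 ?_⟩, rfl⟩
    rw [le_div_iff₀ hm, mul_comm]
    exact (hmT x hx).trans (mem_ball_zero_iff.1 hz).le
  exact image_mono inter_subset_left (hcpt.isClosed.closure_subset hy')

end ConeImage

theorem IsCompact.exists_mem_forall_pos_of_convex {E : Type*} [AddCommGroup E] [Module ℝ E]
    [TopologicalSpace E] {B : Set E} (hB : IsCompact B) {Λ : Set (E →ₗ[ℝ] ℝ)}
    (hΛ : Convex ℝ Λ) (hΛne : Λ.Nonempty) (hcont : ∀ L ∈ Λ, Continuous L)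
    (hnonneg : ∀ L ∈ Λ, ∀ x ∈ B, 0 ≤ L x) (hpos : ∀ x ∈ B, ∃ L ∈ Λ, 0 < L x) :
    ∃ L ∈ Λ, ∀ x ∈ B, 0 < L x := by
  obtain ⟨t, ht⟩ := hB.elim_finite_subcover (fun L : Λ => {x | 0 < (L : E →ₗ[ℝ] ℝ) x})
    (fun L => isOpen_lt continuous_const (hcont L L.2)) fun x hx => by
      obtain ⟨L, hL, hLx⟩ := hpos x hx
      exact mem_iUnion.2 ⟨⟨L, hL⟩, hLx⟩
  rcases t.eq_empty_or_nonempty with rfl | htne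
  · obtain ⟨L, hL⟩ := hΛne
    exact ⟨L, hL, fun x hx => by simpa using ht hx⟩
  refine ⟨t.centerMass (fun _ => 1) (fun L => L),
    hΛ.centerMass_mem (fun _ _ => zero_le_one) (by simpa using htne) fun L _ => L.2,
    fun x hx => ?_⟩
  obtain ⟨L, hLt, hLx⟩ := mem_iUnion₂.1 (ht hx)
  simp only [Finset.centerMass, one_smul, LinearMap.smul_apply, LinearMap.sum_apply,
    smul_eq_mul]
  exact mul_pos (by simpa using htne)
    (Finset.sum_pos' (fun L' _ => hnonneg L' L'.2 x hx) ⟨L, hLt, hLx⟩)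

section ExtensionCone
variable {M : Type*} [NormedAddCommGroup M] [NormedSpace ℝ M] {S : Submodule ℝ M}

/-- The cone `{(c - s, l s) | c ∈ K, s ∈ S}`: a functional `(x, r) ↦ L x + t * r` is nonnegative
on it iff `L` is nonnegative on `K` and `L = t • l` on `S`. -/
def PointedCone.extensionCone (K : PointedCone ℝ M) (l : S →ₗ[ℝ] ℝ) : PointedCone ℝ (M × ℝ) :=
  PointedCone.map
    ((LinearMap.fst ℝ M S - S.subtype ∘ₗ LinearMap.snd ℝ M S).prod (l ∘ₗ LinearMap.snd ℝ M S))
    (K.prod ⊤)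

variable (K : PointedCone ℝ M) (l : S →ₗ[ℝ] ℝ)

theorem PointedCone.mem_extensionCone {p : M × ℝ} :
    p ∈ K.extensionCone l ↔ ∃ c ∈ K, ∃ s : S, (c - s, l s) = p := by
  simp [PointedCone.extensionCone, PointedCone.mem_map, Submodule.mem_prod]

theorem PointedCone.sub_mem_extensionCone {c : M} (hc : c ∈ K) (s : S) :
    (c - s, l s) ∈ K.extensionCone l :=
  (K.mem_extensionCone l).2 ⟨c, hc, s, rfl⟩

theorem PointedCone.disjoint_segment_extensionCone
    (hl : ∀ s : S, (s : M) ∈ K → s ≠ 0 → 0 < l s) {b : M} (hb : b ∈ K) (hnb : -b ∉ K) :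
    Disjoint (segment ℝ ((-b, 0) : M × ℝ) (0, -1)) (K.extensionCone l) := by
  rw [Set.disjoint_left]
  rintro _ ⟨μ, ν, hμ, hν, hμν, rfl⟩ hP
  obtain ⟨c, hc, s, hcs⟩ := (K.mem_extensionCone l).1 hP
  simp only [Prod.smul_mk, Prod.mk_add_mk, smul_zero, add_zero, smul_eq_mul,
    Prod.mk.injEq] at hcs
  obtain ⟨hcs, hls⟩ := hcs
  have hsK : (s : M) ∈ K := by
    rw [show (s : M) = c + μ • b by linear_combination (norm := module) -hcs]
    exact K.add_mem hc (K.smul_mem hμ hb)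
  obtain rfl : s = 0 := by_contra fun hs => by linarith [hl s hsK hs]
  obtain rfl : μ = 1 := by simp only [map_zero] at hls; linarith
  exact hnb (by simpa [show c = -b by simpa using hcs] using hc)

theorem PointedCone.isClosed_extensionCone [FiniteDimensional ℝ M] (hK : IsClosed (K : Set M))
    (hl : ∀ s : S, (s : M) ∈ K → s ≠ 0 → 0 < l s) :
    IsClosed (K.extensionCone l : Set (M × ℝ)) := by
  refine PointedCone.isClosed_map _ (hK.prod isClosed_univ) _ ?_
  rintro ⟨c, s⟩ ⟨hc, -⟩ h
  change ((c - s, l s) : M × ℝ) = 0 at h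
  rw [Prod.mk_eq_zero, sub_eq_zero] at h
  obtain ⟨rfl, hls⟩ := h
  obtain rfl : s = 0 := by_contra fun hs => (hl s hc hs).ne' hls
  rfl

theorem PointedCone.exists_nonneg_extension_pos_at [FiniteDimensional ℝ M]
    (hK : IsClosed (K : Set M)) (hl : ∀ s : S, (s : M) ∈ K → s ≠ 0 → 0 < l s) {b : M}
    (hb : b ∈ K) (hnb : -b ∉ K) :
    ∃ L : M →ₗ[ℝ] ℝ, ((∀ s : S, L s = l s) ∧ ∀ x ∈ K, 0 ≤ L x) ∧ 0 < L b := by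
  obtain ⟨f, hfP, hfseg⟩ := ProperCone.hyperplane_separation
    ⟨K.extensionCone l, K.isClosed_extensionCone l hK hl⟩ (convex_segment _ _)
    (by simpa only [convexHull_pair] using
      (toFinite {((-b, 0) : M × ℝ), (0, -1)}).isCompact_convexHull (𝕜 := ℝ))
    (K.disjoint_segment_extensionCone l hl hb hnb)
  have hfP' : ∀ c ∈ K, ∀ s : S, 0 ≤ f (c - s, l s) := fun c hc s =>
    hfP _ (K.sub_mem_extensionCone l hc s)
  have hf : ∀ x r, f (x, r) = f (x, 0) + r * f (0, 1) := fun x r => by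
    rw [← smul_eq_mul, ← map_smul, ← map_add, Prod.smul_mk, smul_zero, smul_eq_mul, mul_one,
      Prod.mk_add_mk, add_zero, zero_add]
  have ht : 0 < f (0, 1) := by
    have := hfseg _ (right_mem_segment _ _ _)
    rw [hf, neg_one_mul, Prod.mk_zero_zero, map_zero, zero_add] at this
    linarith
  have hfb : 0 < f (b, 0) := by
    have := hfseg _ (left_mem_segment _ _ _)
    rw [show ((-b, 0) : M × ℝ) = -(b, 0) by simp, map_neg] at this
    linarith
  have hfS : ∀ s : S, f (s, 0) = l s * f (0, 1) := fun s => by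
    have h₁ := hfP' 0 K.zero_mem s
    have h₂ := hfP' 0 K.zero_mem (-s)
    rw [hf] at h₁ h₂
    simp only [zero_sub, map_neg, Submodule.coe_neg, neg_neg] at h₁ h₂
    rw [show ((-(s : M), 0) : M × ℝ) = -((s : M), 0) by simp, map_neg] at h₁
    linarith
  refine ⟨(f (0, 1))⁻¹ • ((f : M × ℝ →ₗ[ℝ] ℝ) ∘ₗ LinearMap.inl ℝ M ℝ),
    ⟨fun s => ?_, fun x hx => ?_⟩, ?_⟩ <;>
    simp only [LinearMap.smul_apply, LinearMap.comp_apply, LinearMap.inl_apply, smul_eq_mul,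
      ContinuousLinearMap.coe_coe]
  · rw [hfS]
    field_simp
  · have := hfP' x hx 0
    simp only [ZeroMemClass.coe_zero, sub_zero, map_zero] at this
    positivity
  · positivity

theorem PointedCone.exists_pos_extension [FiniteDimensional ℝ M] (hK : IsClosed (K : Set M))
    (hsal : (K : ConvexCone ℝ M).Salient) (hl : ∀ s : S, (s : M) ∈ K → s ≠ 0 → 0 < l s) :
    ∃ L : M →ₗ[ℝ] ℝ, (∀ s : S, L s = l s) ∧ ∀ x ∈ K, x ≠ 0 → 0 < L x := by
  set Λ := {L : M →ₗ[ℝ] ℝ | (∀ s : S, L s = l s) ∧ ∀ x ∈ K, 0 ≤ L x}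
  have hΛ : Convex ℝ Λ := by
    rintro L ⟨hLS, hLK⟩ L' ⟨hL'S, hL'K⟩ a b ha hb hab
    refine ⟨fun s => ?_, fun x hx => ?_⟩
    · simp only [LinearMap.add_apply, LinearMap.smul_apply, smul_eq_mul, hLS, hL'S]
      rw [← add_mul, hab, one_mul]
    · have := hLK x hx
      have := hL'K x hx
      simp only [LinearMap.add_apply, LinearMap.smul_apply, smul_eq_mul]
      positivity
  have hpos : ∀ x ∈ (K : Set M) ∩ sphere 0 1, ∃ L ∈ Λ, 0 < L x := fun x hx =>
    K.exists_nonneg_extension_pos_at l hK hl hx.1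
      (hsal x hx.1 (ne_zero_of_mem_unit_sphere ⟨x, hx.2⟩))
  have hΛne : Λ.Nonempty := by
    rcases ((K : Set M) ∩ sphere 0 1).eq_empty_or_nonempty with hB | ⟨b, hb⟩
    · obtain ⟨L, hL⟩ := LinearMap.exists_extend l
      refine ⟨L, fun s => LinearMap.congr_fun hL s, fun x hx => ?_⟩
      obtain rfl : x = 0 := by_contra fun hx0 => hB.subset (K.inv_norm_smul_mem_sphere hx hx0)
      simp
    · exact (hpos b hb).imp fun _ => And.left
  obtain ⟨L, ⟨hLS, -⟩, hL⟩ := ((isCompact_sphere 0 1).inter_left hK).exists_mem_forall_pos_of_convex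
    hΛ hΛne (fun L _ => L.continuous_of_finiteDimensional) (fun L hL x hx => hL.2 x hx.1) hpos
  refine ⟨L, hLS, fun x hx hx0 => ?_⟩
  have := hL _ (K.inv_norm_smul_mem_sphere hx hx0)
  rw [map_smul, smul_eq_mul] at this
  exact pos_of_mul_pos_right this (by positivity)

end ExtensionCone

theorem extension_of_strictly_positive_functional
    {M : Type*} [NormedAddCommGroup M] [NormedSpace ℝ M] [FiniteDimensional ℝ M]
    (C : Set M) (hclosed : IsClosed C)
    (hadd : ∀ x ∈ C, ∀ y ∈ C, x + y ∈ C)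
    (hsmul : ∀ x ∈ C, ∀ r : ℝ, 0 ≤ r → r • x ∈ C)
    (hpointed : C ∩ (-C) = {0})
    (S : Submodule ℝ M) (l : S →ₗ[ℝ] ℝ)
    (hl : ∀ s : S, (s : M) ∈ C → s ≠ 0 → 0 < l s) :
    ∃ L : M →ₗ[ℝ] ℝ, (∀ s : S, L (s : M) = l s) ∧
      ∀ m ∈ C, m ≠ 0 → 0 < L m := by
  let K : PointedCone ℝ M :=
    { carrier := C
      add_mem' := fun hx hy => hadd _ hx _ hy
      zero_mem' := (hpointed.symm ▸ rfl : (0 : M) ∈ C ∩ -C).1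
      smul_mem' := fun c x hx => hsmul x hx c c.2 }
  exact K.exists_pos_extension l hclosed (K.salient_iff_inter_neg_eq_singleton.2 hpointed) hl
end

section
/- Let n, k be positive integers and let φ : M_n(ℂ) → M_k(ℂ) be a linear map. Then φ is completely positive if and only if its Choi matrix Φ_φ = [φ(E^{(n)}_{l,m})]_{l,m=1}^n ∈ M_{nk}(ℂ) is positive semidefinite. -/
open scoped Matrix ComplexOrder

/-- The map `I_m ⊗ φ`: apply `φ` to each `n×n` block of an `mn×mn` block matrix. -/
def blockMap {n k : ℕ} (φ : Matrix (Fin n) (Fin n) ℂ →ₗ[ℂ] Matrix (Fin k) (Fin k) ℂ)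
    (m : ℕ) (M : Matrix (Fin m × Fin n) (Fin m × Fin n) ℂ) :
    Matrix (Fin m × Fin k) (Fin m × Fin k) ℂ :=
  Matrix.of fun r s => φ (Matrix.of fun a b => M (r.1, a) (s.1, b)) r.2 s.2

/-- A linear map `φ : M_n(ℂ) → M_k(ℂ)` is completely positive if `I_m ⊗ φ` maps
positive semidefinite matrices to positive semidefinite matrices for every `m`. -/
def IsCompletelyPositive {n k : ℕ}
    (φ : Matrix (Fin n) (Fin n) ℂ →ₗ[ℂ] Matrix (Fin k) (Fin k) ℂ) : Prop :=
  ∀ (m : ℕ) (M : Matrix (Fin m × Fin n) (Fin m × Fin n) ℂ),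
    M.PosSemidef → (blockMap φ m M).PosSemidef

/-- The Choi matrix `[φ(E_{l,m})]_{l,m}` of a linear map `φ : M_n(ℂ) → M_k(ℂ)`,
with entries `(Φ_φ)_{(l,i),(m,j)} = φ(E^{(n)}_{l,m})_{i,j}`. -/
noncomputable def choiMatrix {n k : ℕ}
    (φ : Matrix (Fin n) (Fin n) ℂ →ₗ[ℂ] Matrix (Fin k) (Fin k) ℂ) :
    Matrix (Fin n × Fin k) (Fin n × Fin k) ℂ :=
  Matrix.of fun r s => φ (Matrix.single r.1 s.1 1) r.2 s.2

/-!
(⇒) The Choi matrix is `(I_n ⊗ φ)(ωω*)` for the vector `ω = ∑ₗ eₗ ⊗ eₗ`, and `ωω*` is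
positive semidefinite. (⇐) Write `Φ_φ = A*A`; reshaping the rows of `A` into `k×n` matrices
`Bₚ` gives a Kraus decomposition `φ(X) = ∑ₚ Bₚ X Bₚ*`, and then `I_m ⊗ φ` is
`M ↦ ∑ₚ (1 ⊗ Bₚ) M (1 ⊗ Bₚ)*`, which preserves positivity.
-/

open scoped MatrixOrder in
theorem Matrix.PosSemidef.exists_eq_conjTranspose_mul_self {𝕜 ι : Type*} [RCLike 𝕜]
    [Fintype ι] [DecidableEq ι] {A : Matrix ι ι 𝕜} (hA : A.PosSemidef) :
    ∃ B : Matrix ι ι 𝕜, A = Bᴴ * B :=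
  CStarAlgebra.nonneg_iff_eq_star_mul_self.mp hA.nonneg

open Matrix
open scoped Kronecker

section

variable {n k : ℕ} (φ : Matrix (Fin n) (Fin n) ℂ →ₗ[ℂ] Matrix (Fin k) (Fin k) ℂ)

def maxEntangled (n : ℕ) : Fin n × Fin n → ℂ := fun x => if x.1 = x.2 then 1 else 0

theorem choiMatrix_eq_blockMap :
    choiMatrix φ = blockMap φ n (vecMulVec (maxEntangled n) (star (maxEntangled n))) := by
  ext ⟨l, i⟩ ⟨t, j⟩
  suffices single l t 1 = of fun a b => maxEntangled n (l, a) * star (maxEntangled n (t, b)) by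
    simp [choiMatrix, blockMap, vecMulVec, this]
  ext a b
  by_cases hla : l = a <;> by_cases htb : t = b <;> simp [maxEntangled, *]

theorem IsCompletelyPositive.choiMatrix_posSemidef (hφ : IsCompletelyPositive φ) :
    (choiMatrix φ).PosSemidef :=
  choiMatrix_eq_blockMap φ ▸ hφ n _ (posSemidef_vecMulVec_self_star _)

theorem apply_eq_sum_choiMatrix (X : Matrix (Fin n) (Fin n) ℂ) (i j : Fin k) :
    φ X i j = ∑ l, ∑ t, X l t * choiMatrix φ (l, i) (t, j) := by
  have single_eq_smul (l t : Fin n) : single l t (X l t) = X l t • single l t (1 : ℂ) := by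
    rw [smul_single, smul_eq_mul, mul_one]
  conv_lhs => rw [matrix_eq_sum_single X]
  simp_rw [single_eq_smul, map_sum, map_smul, Matrix.sum_apply, Matrix.smul_apply,
    smul_eq_mul]
  rfl

theorem blockMap_eq_sum_of_kraus {ι : Type*} [Fintype ι]
    {B : ι → Matrix (Fin k) (Fin n) ℂ}
    (hφ : ∀ X, φ X = ∑ p, B p * X * (B p)ᴴ) (m : ℕ)
    (M : Matrix (Fin m × Fin n) (Fin m × Fin n) ℂ) :
    blockMap φ m M =
      ∑ p, (1 ⊗ₖ B p : Matrix (Fin m × Fin k) (Fin m × Fin n) ℂ) * M *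
        (1 ⊗ₖ B p : Matrix (Fin m × Fin k) (Fin m × Fin n) ℂ)ᴴ := by
  ext ⟨r, i⟩ ⟨s, j⟩
  simp only [blockMap, of_apply, hφ, Matrix.sum_apply]
  refine Finset.sum_congr rfl fun p _ => ?_
  simp [mul_apply, one_apply, Fintype.sum_prod_type, apply_ite (starRingEnd ℂ),
    Finset.sum_ite_irrel]

theorem isCompletelyPositive_of_kraus {ι : Type*} [Fintype ι]
    {B : ι → Matrix (Fin k) (Fin n) ℂ}
    (hφ : ∀ X, φ X = ∑ p, B p * X * (B p)ᴴ) : IsCompletelyPositive φ := fun m M hM => by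
  rw [blockMap_eq_sum_of_kraus φ hφ]
  exact posSemidef_sum _ fun p _ => hM.mul_mul_conjTranspose_same _

def choiKraus (A : Matrix (Fin n × Fin k) (Fin n × Fin k) ℂ) (p : Fin n × Fin k) :
    Matrix (Fin k) (Fin n) ℂ :=
  of fun i l => star (A p (l, i))

theorem eq_sum_kraus_of_choiMatrix_eq {A : Matrix (Fin n × Fin k) (Fin n × Fin k) ℂ}
    (hA : choiMatrix φ = Aᴴ * A) (X : Matrix (Fin n) (Fin n) ℂ) :
    φ X = ∑ p, choiKraus A p * X * (choiKraus A p)ᴴ := by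
  ext i j
  simp only [apply_eq_sum_choiMatrix, hA, Matrix.sum_apply, mul_apply, conjTranspose_apply,
    choiKraus, of_apply, star_star, Finset.mul_sum, Finset.sum_mul]
  conv_lhs => rw [Finset.sum_comm]
  conv_rhs =>
    rw [Finset.sum_comm (γ := Fin n × Fin k)]
    enter [2, t]
    rw [Finset.sum_comm]
  exact Fintype.sum_congr _ _ fun t => Fintype.sum_congr _ _ fun l =>
    Fintype.sum_congr _ _ fun p => by ring

theorem isCompletelyPositive_of_choiMatrix_posSemidef (hφ : (choiMatrix φ).PosSemidef) :
    IsCompletelyPositive φ := by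
  obtain ⟨A, hA⟩ := hφ.exists_eq_conjTranspose_mul_self
  exact isCompletelyPositive_of_kraus φ (eq_sum_kraus_of_choiMatrix_eq φ hA)

end

theorem completelyPositive_iff_choiMatrix_posSemidef_general {n k : ℕ}
    (φ : Matrix (Fin n) (Fin n) ℂ →ₗ[ℂ] Matrix (Fin k) (Fin k) ℂ) :
    IsCompletelyPositive φ ↔ (choiMatrix φ).PosSemidef :=
  ⟨IsCompletelyPositive.choiMatrix_posSemidef φ, isCompletelyPositive_of_choiMatrix_posSemidef φ⟩

theorem completelyPositive_iff_choiMatrix_posSemidef {n k : ℕ} (hn : 0 < n) (hk : 0 < k)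
    (φ : Matrix (Fin n) (Fin n) ℂ →ₗ[ℂ] Matrix (Fin k) (Fin k) ℂ) :
    IsCompletelyPositive φ ↔ (choiMatrix φ).PosSemidef :=
  completelyPositive_iff_choiMatrix_posSemidef_general φ
end
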